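/- Let E = V × V be the complete set of directed edges on a finite vertex set V, and let G⃗ = (V, E, w), G⃗' = (V, E, w') be weighted directed graphs (an edge is present exactly when its weight is positive). Say that G⃗' is degree balance preserving with respect to G⃗ if for every connected component U ⊆ V of und(G⃗): B_Uᵀ w_U = B_Uᵀ w'_U, where B_U and w_U, w'_U are the restrictions to edges in U × U, and moreover w' vanishes on every edge having exactly one endpoint in U. Then the following are equivalent: (a) for all x, y ∈ ℝ^V, |xᵀ (L⃗_G − L⃗_{G'}) y| ≤ ε · √((xᵀ L_G x)·(yᵀ L_G y)); (b) G⃗' is degree balance preserving with respect to G⃗ and ‖L_G^{†/2} (L⃗_G − L⃗_{G'}) L_G^{†/2}‖ ≤ ε. -/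

import Mathlib

open Matrix BigOperators

noncomputable section

/-- The 0/1 indicator matrix of a map from (edge) indices to vertices:
row `e` is the indicator of the vertex `f e`. -/
def indMat {E V : Type*} [DecidableEq V] (f : E → V) : Matrix E V ℝ :=
  Matrix.of fun e v => if f e = v then (1 : ℝ) else 0

/-- The edge–vertex transfer matrix `B = H - T` of a directed graph with head map `hd`
and tail map `tl`. -/
def transMat {E V : Type*} [DecidableEq V] (hd tl : E → V) : Matrix E V ℝ :=
  indMat hd - indMat tl

/-- The directed Laplacian `Bᵀ W H`. -/
def dirLap {E V : Type*} [Fintype E] [DecidableEq E] [DecidableEq V]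
    (hd tl : E → V) (w : E → ℝ) : Matrix V V ℝ :=
  (transMat hd tl)ᵀ * Matrix.diagonal w * indMat hd

/-- The undirected Laplacian `Bᵀ W B` of the corresponding undirected graph. -/
def undLap {E V : Type*} [Fintype E] [DecidableEq E] [DecidableEq V]
    (hd tl : E → V) (w : E → ℝ) : Matrix V V ℝ :=
  (transMat hd tl)ᵀ * Matrix.diagonal w * transMat hd tl

/-- The corresponding undirected (simple) graph of a weighted directed graph:
`u ~ v` iff `u ≠ v` and some edge of positive weight joins them (in either direction). -/
def undSG {E V : Type*} (hd tl : E → V) (w : E → ℝ) : SimpleGraph V :=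
  SimpleGraph.fromRel (fun u v => ∃ e, 0 < w e ∧ hd e = u ∧ tl e = v)

/-- Directed Laplacian for a graph whose edges are indexed by pairs of vertices. -/
def dirLapP {V : Type*} [Fintype V] [DecidableEq V] (w : V × V → ℝ) : Matrix V V ℝ :=
  dirLap Prod.fst Prod.snd w

/-- Undirected Laplacian for a graph whose edges are indexed by pairs of vertices. -/
def undLapP {V : Type*} [Fintype V] [DecidableEq V] (w : V × V → ℝ) : Matrix V V ℝ :=
  undLap Prod.fst Prod.snd w

/-- Corresponding undirected graph for edges indexed by pairs of vertices. -/
def undSGP {V : Type*} (w : V × V → ℝ) : SimpleGraph V :=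
  undSG Prod.fst Prod.snd w

/-- `B` is a Moore–Penrose pseudoinverse of `A`. -/
def IsMPInv {V : Type*} [Fintype V] (A B : Matrix V V ℝ) : Prop :=
  A * B * A = A ∧ B * A * B = B ∧ (A * B)ᵀ = A * B ∧ (B * A)ᵀ = B * A

open Classical in
/-- The Moore–Penrose pseudoinverse of a (square, real) matrix. -/
noncomputable def mpinv {V : Type*} [Fintype V] (A : Matrix V V ℝ) : Matrix V V ℝ :=
  if h : ∃ B, IsMPInv A B then h.choose else 0

open Classical in
/-- The PSD square root of a positive semidefinite matrix (junk value `0` otherwise). -/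
noncomputable def psdSqrt {V : Type*} [Fintype V] [DecidableEq V] (A : Matrix V V ℝ) :
    Matrix V V ℝ :=
  if h : A.PosSemidef then
    h.1.eigenvectorUnitary.1 * diagonal ((RCLike.ofReal : ℝ → ℝ) ∘ Real.sqrt ∘ h.1.eigenvalues) *
      (star h.1.eigenvectorUnitary : Matrix V V ℝ) else 0

/-- `A^{†/2} = (A†)^{1/2} = (A^{1/2})†` for a PSD matrix `A`. -/
noncomputable def pinvSqrt {V : Type*} [Fintype V] [DecidableEq V] (A : Matrix V V ℝ) :
    Matrix V V ℝ :=
  mpinv (psdSqrt A)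

/-- The ℓ₂→ℓ₂ (spectral) operator norm of `A` is at most `c`. -/
def l2OpNormLE {m n : Type*} [Fintype m] [Fintype n] (A : Matrix m n ℝ) (c : ℝ) : Prop :=
  ∀ (x : m → ℝ) (y : n → ℝ),
    |x ⬝ᵥ A.mulVec y| ≤ c * Real.sqrt (∑ i, x i ^ 2) * Real.sqrt (∑ j, y j ^ 2)

/-- `|xᵀ A y| ≤ ε √((xᵀ L x)(yᵀ L y))` for all vectors `x, y`. -/
def bilinApprox {V : Type*} [Fintype V] (A L : Matrix V V ℝ) (ε : ℝ) : Prop :=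
  ∀ x y : V → ℝ,
    |x ⬝ᵥ A.mulVec y| ≤ ε * Real.sqrt ((x ⬝ᵥ L.mulVec x) * (y ⬝ᵥ L.mulVec y))

/-- Schur complement of a `(V ⊕ X) × (V ⊕ X)` matrix onto the `V`-block. -/
def schurInl {V X : Type*} [Fintype V] [Fintype X] (A : Matrix (V ⊕ X) (V ⊕ X) ℝ) :
    Matrix V V ℝ :=
  A.submatrix Sum.inl Sum.inl -
    A.submatrix Sum.inl Sum.inr * mpinv (A.submatrix Sum.inr Sum.inr) *
      A.submatrix Sum.inr Sum.inl

/-- `U` is a connected component of the simple graph `G`. -/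
def IsCompOf {V : Type*} (G : SimpleGraph V) (U : Set V) : Prop :=
  ∃ v, U = {u | G.Reachable u v}


section MPHelpers
variable {n : Type*} [Fintype n]

lemma isMPInv_unique {A B C : Matrix n n ℝ} (hB : IsMPInv A B) (hC : IsMPInv A C) : B = C := by
  obtain ⟨b1, b2, b3, b4⟩ := hB
  obtain ⟨c1, c2, c3, c4⟩ := hC
  have hAB : A * B = A * C := by
    calc A * B = A * C * A * B := by rw [c1]
    _ = (A * C)ᵀ * (A * B)ᵀ := by rw [c3, b3]; exact mul_assoc _ _ _
    _ = Cᵀ * (A * B * A)ᵀ := by simp only [Matrix.transpose_mul, Matrix.mul_assoc]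
    _ = Cᵀ * Aᵀ := by rw [b1]
    _ = (A * C)ᵀ := (Matrix.transpose_mul A C).symm
    _ = A * C := c3
  have hBA : B * A = C * A := by
    calc B * A = B * (A * C * A) := by rw [c1]
    _ = (B * A)ᵀ * (C * A)ᵀ := by rw [b4, c4]; try simp only [Matrix.mul_assoc]
    _ = (A * B * A)ᵀ * Cᵀ := by simp only [Matrix.transpose_mul, Matrix.mul_assoc]
    _ = Aᵀ * Cᵀ := by rw [b1]
    _ = (C * A)ᵀ := (Matrix.transpose_mul C A).symm
    _ = C * A := c4
  calc B = B * A * B := b2.symm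
  _ = B * A * C := by rw [mul_assoc, hAB, ← mul_assoc]
  _ = C * A * C := by rw [hBA]
  _ = C := c2

lemma isMPInv_transpose {A B : Matrix n n ℝ} (h : IsMPInv A B) : IsMPInv Aᵀ Bᵀ := by
  obtain ⟨h1, h2, h3, h4⟩ := h
  refine ⟨?_, ?_, ?_, ?_⟩
  · calc Aᵀ * Bᵀ * Aᵀ = (A * B * A)ᵀ := by simp only [Matrix.transpose_mul, Matrix.mul_assoc]
    _ = Aᵀ := by rw [h1]
  · calc Bᵀ * Aᵀ * Bᵀ = (B * A * B)ᵀ := by simp only [Matrix.transpose_mul, Matrix.mul_assoc]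
    _ = Bᵀ := by rw [h2]
  · calc (Aᵀ * Bᵀ)ᵀ = B * A := by simp [Matrix.transpose_mul]
    _ = (B * A)ᵀ := h4.symm
    _ = Aᵀ * Bᵀ := by simp [Matrix.transpose_mul]
  · calc (Bᵀ * Aᵀ)ᵀ = A * B := by simp [Matrix.transpose_mul]
    _ = (A * B)ᵀ := h3.symm
    _ = Bᵀ * Aᵀ := by simp [Matrix.transpose_mul]

lemma isMPInv_conj [DecidableEq n] {K : Matrix n n ℝ} (h1 : Kᵀ * K = 1) (d : n → ℝ) :
    IsMPInv (K * Matrix.diagonal d * Kᵀ) (K * Matrix.diagonal (fun i => (d i)⁻¹) * Kᵀ) := by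
  have key : ∀ a b : n → ℝ, (K * Matrix.diagonal a * Kᵀ) * (K * Matrix.diagonal b * Kᵀ)
      = K * Matrix.diagonal (fun i => a i * b i) * Kᵀ := by
    intro a b
    calc (K * Matrix.diagonal a * Kᵀ) * (K * Matrix.diagonal b * Kᵀ)
        = K * (Matrix.diagonal a * ((Kᵀ * K) * (Matrix.diagonal b * Kᵀ))) := by
          simp only [Matrix.mul_assoc]
    _ = K * (Matrix.diagonal a * (Matrix.diagonal b * Kᵀ)) := by rw [h1, one_mul]
    _ = K * ((Matrix.diagonal a * Matrix.diagonal b) * Kᵀ) := by rw [Matrix.mul_assoc]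
    _ = K * (Matrix.diagonal (fun i => a i * b i) * Kᵀ) := by
          rw [Matrix.diagonal_mul_diagonal]
    _ = K * Matrix.diagonal (fun i => a i * b i) * Kᵀ := by rw [Matrix.mul_assoc]
  have hsym : ∀ c : n → ℝ, (K * Matrix.diagonal c * Kᵀ)ᵀ = K * Matrix.diagonal c * Kᵀ := by
    intro c
    simp only [Matrix.transpose_mul, Matrix.transpose_transpose, Matrix.diagonal_transpose,
      Matrix.mul_assoc]
  have hddd : (fun i => (d i * (d i)⁻¹) * d i) = d := by
    funext i
    rcases eq_or_ne (d i) 0 with h | h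
    · simp [h]
    · field_simp
  have hiii : (fun i => ((d i)⁻¹ * d i) * (d i)⁻¹) = fun i => (d i)⁻¹ := by
    funext i
    rcases eq_or_ne (d i) 0 with h | h
    · simp [h]
    · field_simp
  refine ⟨?_, ?_, ?_, ?_⟩
  · rw [key, key, hddd]
  · rw [key, key, hiii]
  · rw [key]; exact hsym _
  · rw [key]; exact hsym _

lemma exists_isMPInv [DecidableEq n] {A : Matrix n n ℝ} (hA : A.IsHermitian) :
    ∃ B, IsMPInv A B := by
  set K : Matrix n n ℝ := (hA.eigenvectorUnitary : Matrix n n ℝ) with hK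
  have hstar : star K = Kᵀ := by
    rw [Matrix.star_eq_conjTranspose, Matrix.conjTranspose_eq_transpose_of_trivial]
  have hKK : Kᵀ * K = 1 := by
    rw [← hstar]
    exact Matrix.mem_unitaryGroup_iff'.mp hA.eigenvectorUnitary.2
  set d : n → ℝ := hA.eigenvalues with hd
  have hspec : A = K * Matrix.diagonal d * Kᵀ := by
    have := hA.spectral_theorem
    rw [Unitary.conjStarAlgAut_apply, hstar] at this
    exact this
  rw [hspec]
  exact ⟨K * Matrix.diagonal (fun i => (d i)⁻¹) * Kᵀ, isMPInv_conj hKK d⟩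

lemma isMPInv_mpinv {A : Matrix n n ℝ} (h : ∃ B, IsMPInv A B) : IsMPInv A (mpinv A) := by
  have : mpinv A = h.choose := by simp only [mpinv, dif_pos h]
  rw [this]
  exact h.choose_spec

lemma mpinv_transpose_eq {A : Matrix n n ℝ} (hA : Aᵀ = A) (h : ∃ B, IsMPInv A B) :
    (mpinv A)ᵀ = mpinv A := by
  have h1 := isMPInv_mpinv h
  have h2 := isMPInv_transpose h1
  rw [hA] at h2
  exact isMPInv_unique h2 h1

lemma dot_sym_mulVec {M : Matrix n n ℝ} (hM : Mᵀ = M) (x z : n → ℝ) :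
    x ⬝ᵥ M *ᵥ z = (M *ᵥ x) ⬝ᵥ z := by
  rw [Matrix.dotProduct_mulVec]
  conv_lhs => rw [← hM]
  rw [Matrix.vecMul_transpose]

end MPHelpers

section FormulaHelpers
variable {V : Type*} [Fintype V] [DecidableEq V]

lemma indMat_mulVec {E : Type*} (f : E → V) (z : V → ℝ) (e : E) :
    (indMat f *ᵥ z) e = z (f e) := by
  simp [indMat, Matrix.mulVec, dotProduct, ite_mul, one_mul, zero_mul,
    Finset.sum_ite_eq, Finset.sum_ite_eq']

lemma transMat_mulVec {E : Type*} (hd tl : E → V) (z : V → ℝ) (e : E) :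
    (transMat hd tl *ᵥ z) e = z (hd e) - z (tl e) := by
  rw [transMat, Matrix.sub_mulVec]
  simp [indMat_mulVec]

lemma quadform (w : V × V → ℝ) (x y : V → ℝ) :
    x ⬝ᵥ (undLapP w) *ᵥ y = ∑ e : V × V, w e * ((x e.1 - x e.2) * (y e.1 - y e.2)) := by
  have hstep : (undLapP w) *ᵥ y =
      (transMat (Prod.fst : V × V → V) Prod.snd)ᵀ *ᵥ
        (Matrix.diagonal w *ᵥ (transMat (Prod.fst : V × V → V) Prod.snd *ᵥ y)) := by
    simp only [undLapP, undLap, Matrix.mulVec_mulVec, Matrix.mul_assoc]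
  rw [hstep, Matrix.dotProduct_mulVec, Matrix.vecMul_transpose]
  simp only [dotProduct, Matrix.mulVec_diagonal]
  refine Finset.sum_congr rfl fun e _ => ?_
  rw [transMat_mulVec, transMat_mulVec]
  ring

lemma indMat_apply {E : Type*} (f : E → V) (e : E) (v : V) :
    indMat f e v = if f e = v then 1 else 0 := rfl

lemma dirLapP_mulVec (ω : V × V → ℝ) (z : V → ℝ) (u : V) :
    (dirLapP ω *ᵥ z) u = (∑ b, ω (u, b) * z u) - ∑ v, ω (v, u) * z v := by
  have hstep : dirLapP ω *ᵥ z = (transMat (Prod.fst : V × V → V) Prod.snd)ᵀ *ᵥ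
      (Matrix.diagonal ω *ᵥ (indMat (Prod.fst : V × V → V) *ᵥ z)) := by
    simp only [dirLapP, dirLap, Matrix.mulVec_mulVec, Matrix.mul_assoc]
  have h1 : indMat (Prod.fst : V × V → V) *ᵥ z = fun e => z e.1 :=
    funext fun e => indMat_mulVec _ z e
  have h2 : Matrix.diagonal ω *ᵥ (fun e : V × V => z e.1) = fun e => ω e * z e.1 :=
    funext fun e => Matrix.mulVec_diagonal _ _ e
  rw [hstep, h1, h2, Matrix.mulVec_transpose]
  show ∑ e : V × V, (ω e * z e.1) * transMat Prod.fst Prod.snd e u = _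
  simp only [transMat, Matrix.sub_apply, indMat_apply]
  rw [Fintype.sum_prod_type]
  simp only [mul_sub, mul_ite, mul_one, mul_zero, Finset.sum_sub_distrib]
  congr 1
  · rw [Finset.sum_comm]
    simp only [Finset.sum_ite_eq', Finset.mem_univ, if_true]
  · simp only [Finset.sum_ite_eq', Finset.mem_univ, if_true]

lemma dirLapP_transpose_mulVec (ω : V × V → ℝ) (z : V → ℝ) (u : V) :
    ((dirLapP ω)ᵀ *ᵥ z) u = (∑ b, ω (u, b) * z u) - ∑ v, ω (u, v) * z v := by
  rw [Matrix.mulVec_transpose]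
  have hstep : z ᵥ* dirLapP ω =
      ((z ᵥ* (transMat (Prod.fst : V × V → V) Prod.snd)ᵀ) ᵥ* Matrix.diagonal ω) ᵥ*
        indMat (Prod.fst : V × V → V) := by
    simp only [dirLapP, dirLap, Matrix.vecMul_vecMul, Matrix.mul_assoc]
  rw [hstep, Matrix.vecMul_transpose]
  have h3 : transMat (Prod.fst : V × V → V) Prod.snd *ᵥ z = fun e => z e.1 - z e.2 :=
    funext fun e => transMat_mulVec _ _ z e
  rw [h3]
  have h4 : (fun e : V × V => z e.1 - z e.2) ᵥ* Matrix.diagonal ω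
      = fun e => (z e.1 - z e.2) * ω e :=
    funext fun e => Matrix.vecMul_diagonal _ _ e
  rw [h4]
  show ∑ e : V × V, ((z e.1 - z e.2) * ω e) * indMat Prod.fst e u = _
  simp only [indMat_apply, mul_ite, mul_one, mul_zero]
  rw [Fintype.sum_prod_type, Finset.sum_comm]
  simp only [Finset.sum_ite_eq', Finset.mem_univ, if_true]
  simp only [sub_mul, Finset.sum_sub_distrib]
  congr 1 <;> exact Finset.sum_congr rfl fun b _ => mul_comm _ _

end FormulaHelpers

section GraphHelpers
variable {V : Type*} [Fintype V] [DecidableEq V]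

lemma undSGP_adj (w : V × V → ℝ) (u v : V) :
    (undSGP w).Adj u v ↔ u ≠ v ∧ (0 < w (u, v) ∨ 0 < w (v, u)) := by
  rw [undSGP, undSG, SimpleGraph.fromRel_adj]
  constructor
  · rintro ⟨hne, ⟨e, he, h1, h2⟩ | ⟨e, he, h1, h2⟩⟩
    · exact ⟨hne, Or.inl (by rwa [← h1, ← h2, Prod.mk.eta])⟩
    · exact ⟨hne, Or.inr (by rwa [← h1, ← h2, Prod.mk.eta])⟩
  · rintro ⟨hne, h | h⟩
    · exact ⟨hne, Or.inl ⟨(u, v), h, rfl, rfl⟩⟩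
    · exact ⟨hne, Or.inr ⟨(v, u), h, rfl, rfl⟩⟩

lemma isCompOf_mem_iff {G : SimpleGraph V} {U : Set V} (hU : IsCompOf G U)
    {a b : V} (hab : G.Adj a b) : a ∈ U ↔ b ∈ U := by
  obtain ⟨v₀, rfl⟩ := hU
  simp only [Set.mem_setOf_eq]
  exact ⟨fun h => hab.symm.reachable.trans h, fun h => hab.reachable.trans h⟩

lemma w_cross1 {w : V × V → ℝ} (hw : ∀ e, 0 ≤ w e) {U : Set V}
    (hU : IsCompOf (undSGP w) U) {a b : V} (ha : a ∈ U) (hb : b ∉ U) : w (a, b) = 0 := by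
  by_contra h
  have hp : 0 < w (a, b) := (hw _).lt_of_ne (Ne.symm h)
  have hne : a ≠ b := fun hh => hb (hh ▸ ha)
  exact hb ((isCompOf_mem_iff hU ((undSGP_adj w a b).mpr ⟨hne, Or.inl hp⟩)).mp ha)

lemma w_cross2 {w : V × V → ℝ} (hw : ∀ e, 0 ≤ w e) {U : Set V}
    (hU : IsCompOf (undSGP w) U) {a b : V} (ha : a ∈ U) (hb : b ∉ U) : w (b, a) = 0 := by
  by_contra h
  have hp : 0 < w (b, a) := (hw _).lt_of_ne (Ne.symm h)
  have hne : a ≠ b := fun hh => hb (hh ▸ ha)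
  exact hb ((isCompOf_mem_iff hU ((undSGP_adj w a b).mpr ⟨hne, Or.inr hp⟩)).mp ha)

lemma struct_iff_mulVec (w w' : V × V → ℝ) (hw : ∀ e, 0 ≤ w e) (hw' : ∀ e, 0 ≤ w' e)
    (U : Set V) (hU : IsCompOf (undSGP w) U) :
    ((∀ v ∈ U,
        (∑ u : V, U.indicator (fun u => w (v, u) - w (u, v)) u)
          = ∑ u : V, U.indicator (fun u => w' (v, u) - w' (u, v)) u) ∧
      (∀ u v : V, ((u ∈ U ∧ v ∉ U) ∨ (u ∉ U ∧ v ∈ U)) → w' (u, v) = 0)) ↔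
    (((dirLapP w - dirLapP w') *ᵥ (U.indicator (1 : V → ℝ))) = 0 ∧
     ((dirLapP w - dirLapP w')ᵀ *ᵥ (U.indicator (1 : V → ℝ))) = 0) := by
  classical
  set ind : V → ℝ := U.indicator (1 : V → ℝ) with hinddef
  have hind : ∀ v : V, ind v = if v ∈ U then 1 else 0 := by
    intro v
    rw [hinddef, Set.indicator_apply]
    by_cases hv : v ∈ U <;> simp [hv]
  have hAapply : ∀ u : V, (((dirLapP w - dirLapP w') *ᵥ ind) u)
      = ((∑ b, w (u, b) * ind u) - ∑ v, w (v, u) * ind v)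
        - ((∑ b, w' (u, b) * ind u) - ∑ v, w' (v, u) * ind v) := by
    intro u
    rw [Matrix.sub_mulVec, Pi.sub_apply, dirLapP_mulVec, dirLapP_mulVec]
  have hAtapply : ∀ u : V, (((dirLapP w - dirLapP w')ᵀ *ᵥ ind) u)
      = ((∑ b, w (u, b) * ind u) - ∑ v, w (u, v) * ind v)
        - ((∑ b, w' (u, b) * ind u) - ∑ v, w' (u, v) * ind v) := by
    intro u
    rw [Matrix.transpose_sub, Matrix.sub_mulVec, Pi.sub_apply,
      dirLapP_transpose_mulVec, dirLapP_transpose_mulVec]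
  constructor
  · rintro ⟨hbal, hcrossU⟩
    have hc1 : ∀ a b : V, a ∈ U → b ∉ U → w' (a, b) = 0 :=
      fun a b ha hb => hcrossU a b (Or.inl ⟨ha, hb⟩)
    have hc2 : ∀ a b : V, a ∈ U → b ∉ U → w' (b, a) = 0 :=
      fun a b ha hb => hcrossU b a (Or.inr ⟨hb, ha⟩)
    constructor
    · funext u
      rw [hAapply u, Pi.zero_apply]
      by_cases hu : u ∈ U
      · have h1 : ∑ b, w (u, b) * ind u = ∑ b, w (u, b) := by
          simp [hind u, hu]
        have h3 : ∑ b, w' (u, b) * ind u = ∑ b, w' (u, b) := by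
          simp [hind u, hu]
        have h2 : ∑ v, w (v, u) * ind v = ∑ v, w (v, u) := by
          refine Finset.sum_congr rfl fun v _ => ?_
          by_cases hv : v ∈ U
          · simp [hind v, hv]
          · simp [hind v, hv, w_cross2 hw hU hu hv]
        have h4 : ∑ v, w' (v, u) * ind v = ∑ v, w' (v, u) := by
          refine Finset.sum_congr rfl fun v _ => ?_
          by_cases hv : v ∈ U
          · simp [hind v, hv]
          · simp [hind v, hv, hc2 u v hu hv]
        rw [h1, h2, h3, h4]
        have hb' := hbal u hu
        simp only [Set.indicator_apply] at hb'
        have hb1 : ∑ x : V, (if x ∈ U then w (u, x) - w (x, u) else 0)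
            = ∑ x : V, (w (u, x) - w (x, u)) := by
          refine Finset.sum_congr rfl fun v _ => ?_
          by_cases hv : v ∈ U
          · simp [hv]
          · simp [hv, w_cross1 hw hU hu hv, w_cross2 hw hU hu hv]
        have hb2 : ∑ x : V, (if x ∈ U then w' (u, x) - w' (x, u) else 0)
            = ∑ x : V, (w' (u, x) - w' (x, u)) := by
          refine Finset.sum_congr rfl fun v _ => ?_
          by_cases hv : v ∈ U
          · simp [hv]
          · simp [hv, hc1 u v hu hv, hc2 u v hu hv]
        rw [hb1, hb2] at hb'
        rw [Finset.sum_sub_distrib, Finset.sum_sub_distrib] at hb'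
        linarith [hb']
      · have h1 : ∑ b, w (u, b) * ind u = 0 := by simp [hind u, hu]
        have h3 : ∑ b, w' (u, b) * ind u = 0 := by simp [hind u, hu]
        have h2 : ∑ v, w (v, u) * ind v = 0 := by
          refine Finset.sum_eq_zero fun v _ => ?_
          by_cases hv : v ∈ U
          · simp [hind v, hv, w_cross1 hw hU hv hu]
          · simp [hind v, hv]
        have h4 : ∑ v, w' (v, u) * ind v = 0 := by
          refine Finset.sum_eq_zero fun v _ => ?_
          by_cases hv : v ∈ U
          · simp [hind v, hv, hc1 v u hv hu]
          · simp [hind v, hv]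
        rw [h1, h2, h3, h4]
        ring
    · funext u
      rw [hAtapply u, Pi.zero_apply]
      by_cases hu : u ∈ U
      · have h1 : ∑ b, w (u, b) * ind u = ∑ b, w (u, b) := by simp [hind u, hu]
        have h3 : ∑ b, w' (u, b) * ind u = ∑ b, w' (u, b) := by simp [hind u, hu]
        have h2 : ∑ v, w (u, v) * ind v = ∑ v, w (u, v) := by
          refine Finset.sum_congr rfl fun v _ => ?_
          by_cases hv : v ∈ U
          · simp [hind v, hv]
          · simp [hind v, hv, w_cross1 hw hU hu hv]
        have h4 : ∑ v, w' (u, v) * ind v = ∑ v, w' (u, v) := by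
          refine Finset.sum_congr rfl fun v _ => ?_
          by_cases hv : v ∈ U
          · simp [hind v, hv]
          · simp [hind v, hv, hc1 u v hu hv]
        rw [h1, h2, h3, h4]
        ring
      · have h1 : ∑ b, w (u, b) * ind u = 0 := by simp [hind u, hu]
        have h3 : ∑ b, w' (u, b) * ind u = 0 := by simp [hind u, hu]
        have h2 : ∑ v, w (u, v) * ind v = 0 := by
          refine Finset.sum_eq_zero fun v _ => ?_
          by_cases hv : v ∈ U
          · simp [hind v, hv, w_cross2 hw hU hv hu]
          · simp [hind v, hv]
        have h4 : ∑ v, w' (u, v) * ind v = 0 := by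
          refine Finset.sum_eq_zero fun v _ => ?_
          by_cases hv : v ∈ U
          · simp [hind v, hv, hc1 u v, hc2 v u hv hu]
          · simp [hind v, hv]
        rw [h1, h2, h3, h4]
        ring
  · rintro ⟨hA0, hAt0⟩
    have hindnn : ∀ x : V, (0:ℝ) ≤ ind x := by
      intro x; rw [hind x]; by_cases hx : x ∈ U <;> simp [hx]
    have hii : ∀ u v : V, ((u ∈ U ∧ v ∉ U) ∨ (u ∉ U ∧ v ∈ U)) → w' (u, v) = 0 := by
      rintro u v (⟨hu, hv⟩ | ⟨hu, hv⟩)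
      · have h := congrFun hA0 v
        rw [hAapply v, Pi.zero_apply] at h
        have hv0 : ind v = 0 := by rw [hind v]; simp [hv]
        have hs1 : ∑ x, w (x, v) * ind x = 0 := by
          refine Finset.sum_eq_zero fun x _ => ?_
          by_cases hx : x ∈ U
          · simp [w_cross1 hw hU hx hv]
          · simp [hind x, hx]
        rw [hv0, hs1] at h
        simp only [mul_zero, Finset.sum_const_zero, zero_sub] at h
        have hs2 : ∑ x, w' (x, v) * ind x = 0 := by linarith [h]
        have hterm := (Finset.sum_eq_zero_iff_of_nonneg
          (fun x _ => mul_nonneg (hw' _) (hindnn x))).mp hs2 u (Finset.mem_univ u)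
        rw [hind u] at hterm
        simpa [hu] using hterm
      · have h := congrFun hAt0 u
        rw [hAtapply u, Pi.zero_apply] at h
        have hu0 : ind u = 0 := by rw [hind u]; simp [hu]
        have hs1 : ∑ x, w (u, x) * ind x = 0 := by
          refine Finset.sum_eq_zero fun x _ => ?_
          by_cases hx : x ∈ U
          · simp [w_cross2 hw hU hx hu]
          · simp [hind x, hx]
        rw [hu0, hs1] at h
        simp only [mul_zero, Finset.sum_const_zero, zero_sub] at h
        have hs2 : ∑ x, w' (u, x) * ind x = 0 := by linarith [h]
        have hterm := (Finset.sum_eq_zero_iff_of_nonneg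
          (fun x _ => mul_nonneg (hw' _) (hindnn x))).mp hs2 v (Finset.mem_univ v)
        rw [hind v] at hterm
        simpa [hv] using hterm
    refine ⟨?_, hii⟩
    intro v hv
    simp only [Set.indicator_apply]
    have h := congrFun hA0 v
    rw [hAapply v, Pi.zero_apply] at h
    have hv1 : ind v = 1 := by rw [hind v]; simp [hv]
    simp only [hv1, mul_one] at h
    have e1 : ∑ b, w (v, b) = ∑ b, (if b ∈ U then w (v, b) else 0) := by
      refine Finset.sum_congr rfl fun b _ => ?_
      by_cases hb : b ∈ U
      · simp [hb]
      · simp [hb, w_cross1 hw hU hv hb]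
    have e2 : ∑ b, w' (v, b) = ∑ b, (if b ∈ U then w' (v, b) else 0) := by
      refine Finset.sum_congr rfl fun b _ => ?_
      by_cases hb : b ∈ U
      · simp [hb]
      · simp [hb, hii v b (Or.inl ⟨hv, hb⟩)]
    have e3 : ∑ x, w (x, v) * ind x = ∑ x, (if x ∈ U then w (x, v) else 0) := by
      refine Finset.sum_congr rfl fun x _ => ?_
      rw [hind x]
      by_cases hx : x ∈ U <;> simp [hx]
    have e4 : ∑ x, w' (x, v) * ind x = ∑ x, (if x ∈ U then w' (x, v) else 0) := by
      refine Finset.sum_congr rfl fun x _ => ?_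
      rw [hind x]
      by_cases hx : x ∈ U <;> simp [hx]
    rw [e1, e2, e3, e4] at h
    have hsplit : ∀ (f g : V → ℝ), ∑ u : V, (if u ∈ U then f u - g u else 0)
        = (∑ u : V, if u ∈ U then f u else 0) - ∑ u : V, (if u ∈ U then g u else 0) := by
      intro f g
      rw [← Finset.sum_sub_distrib]
      refine Finset.sum_congr rfl fun u _ => ?_
      by_cases hx : u ∈ U <;> simp [hx]
    rw [hsplit, hsplit]
    linarith [h]

end GraphHelpers

section KernelHelpers
variable {V : Type*} [Fintype V] [DecidableEq V]

lemma undLapP_transpose (w : V × V → ℝ) : (undLapP w)ᵀ = undLapP w := by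
  simp only [undLapP, undLap, Matrix.transpose_mul, Matrix.diagonal_transpose,
    Matrix.transpose_transpose, Matrix.mul_assoc]

lemma undLapP_quad_nonneg (w : V × V → ℝ) (hw : ∀ e, 0 ≤ w e) (x : V → ℝ) :
    0 ≤ x ⬝ᵥ (undLapP w) *ᵥ x := by
  rw [quadform]
  exact Finset.sum_nonneg fun e _ => mul_nonneg (hw e) (mul_self_nonneg _)

lemma undLapP_posSemidef (w : V × V → ℝ) (hw : ∀ e, 0 ≤ w e) : (undLapP w).PosSemidef := by
  rw [Matrix.posSemidef_iff_dotProduct_mulVec]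
  constructor
  · show (undLapP w)ᴴ = undLapP w
    rw [Matrix.conjTranspose_eq_transpose_of_trivial, undLapP_transpose]
  · intro x
    simpa using undLapP_quad_nonneg w hw x

lemma const_on_adj (w : V × V → ℝ) (hw : ∀ e, 0 ≤ w e) (z : V → ℝ)
    (hz : undLapP w *ᵥ z = 0) : ∀ a b : V, (undSGP w).Adj a b → z a = z b := by
  intro a b hab
  have hq : z ⬝ᵥ undLapP w *ᵥ z = 0 := by rw [hz, dotProduct_zero]
  rw [quadform] at hq
  have hterm : ∀ e : V × V, w e * ((z e.1 - z e.2) * (z e.1 - z e.2)) = 0 := fun e =>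
    (Finset.sum_eq_zero_iff_of_nonneg
      (fun e _ => mul_nonneg (hw e) (mul_self_nonneg _))).mp hq e (Finset.mem_univ e)
  have hzz : ∀ p q : V, 0 < w (p, q) → z p = z q := by
    intro p q hp
    have h2 := hterm (p, q)
    rcases mul_eq_zero.mp h2 with h | h
    · exact absurd h (ne_of_gt hp)
    · exact sub_eq_zero.mp (mul_self_eq_zero.mp h)
  rcases (undSGP_adj w a b).mp hab with ⟨_, h | h⟩
  · exact hzz _ _ h
  · exact (hzz _ _ h).symm

lemma reach_const {G : SimpleGraph V} {z : V → ℝ}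
    (hz : ∀ a b : V, G.Adj a b → z a = z b) :
    ∀ a b : V, G.Reachable a b → z a = z b := by
  intro a b hr
  refine hr.elim fun p => ?_
  clear hr
  induction p with
  | nil => rfl
  | cons h q ih => exact (hz _ _ h).trans ih

lemma decomp_mulVec_zero {G : SimpleGraph V} (M : Matrix V V ℝ)
    (hM : ∀ U : Set V, IsCompOf G U → M *ᵥ (U.indicator (1 : V → ℝ)) = 0)
    (z : V → ℝ) (hz : ∀ a b : V, G.Adj a b → z a = z b) : M *ᵥ z = 0 := by
  classical
  haveI : Finite G.ConnectedComponent :=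
    Finite.of_surjective _ (Quot.mk_surjective (r := G.Reachable))
  haveI : Fintype G.ConnectedComponent := Fintype.ofFinite _
  funext u
  have hrw : (M *ᵥ z) u = ∑ v : V, M u v * z v := rfl
  rw [hrw, Pi.zero_apply,
    ← Finset.sum_fiberwise Finset.univ G.connectedComponentMk (fun v => M u v * z v)]
  refine Finset.sum_eq_zero fun c _ => ?_
  have hout : G.connectedComponentMk (Quot.out c) = c := Quot.out_eq c
  set U : Set V := {x : V | G.Reachable x (Quot.out c)} with hUdef
  have hUc : IsCompOf G U := ⟨Quot.out c, hUdef⟩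
  have hmem : ∀ v : V, G.connectedComponentMk v = c ↔ v ∈ U := by
    intro v
    constructor
    · intro h
      have h2 : G.connectedComponentMk v = G.connectedComponentMk (Quot.out c) := by
        rw [h, hout]
      exact SimpleGraph.ConnectedComponent.exact h2
    · intro h
      have h2 := SimpleGraph.ConnectedComponent.sound (h : G.Reachable v (Quot.out c))
      rw [hout] at h2
      exact h2
  have hstep1 : ∑ v ∈ Finset.univ.filter (fun v => G.connectedComponentMk v = c), M u v * z v
      = ∑ v ∈ Finset.univ.filter (fun v => G.connectedComponentMk v = c),
          M u v * z (Quot.out c) := by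
    refine Finset.sum_congr rfl fun v hv => ?_
    rw [Finset.mem_filter] at hv
    rw [reach_const hz v (Quot.out c) ((hmem v).mp hv.2)]
  rw [hstep1, ← Finset.sum_mul]
  have hsum : ∑ v ∈ Finset.univ.filter (fun v => G.connectedComponentMk v = c), M u v
      = (M *ᵥ (U.indicator (1 : V → ℝ))) u := by
    rw [Finset.sum_filter]
    have hrw2 : (M *ᵥ (U.indicator (1 : V → ℝ))) u
        = ∑ v : V, M u v * (U.indicator (1 : V → ℝ)) v := rfl
    rw [hrw2]
    refine Finset.sum_congr rfl fun v _ => ?_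
    by_cases hv : v ∈ U
    · simp [hv, (hmem v).mpr hv, Set.indicator_of_mem]
    · have hnc : ¬(G.connectedComponentMk v = c) := fun hc => hv ((hmem v).mp hc)
      simp [hv, hnc, Set.indicator_of_notMem]
  rw [hsum, hM U hUc, Pi.zero_apply, zero_mul]

lemma indicator_quad_zero (w : V × V → ℝ) (hw : ∀ e, 0 ≤ w e) (U : Set V)
    (hU : IsCompOf (undSGP w) U) :
    (U.indicator (1 : V → ℝ)) ⬝ᵥ (undLapP w) *ᵥ (U.indicator (1 : V → ℝ)) = 0 := by
  classical
  rw [quadform]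
  refine Finset.sum_eq_zero fun e _ => ?_
  rcases eq_or_lt_of_le (hw e) with h | h
  · rw [← h, zero_mul]
  · have hiff : e.1 ∈ U ↔ e.2 ∈ U := by
      rcases eq_or_ne e.1 e.2 with he | he
      · rw [he]
      · refine isCompOf_mem_iff hU ((undSGP_adj w e.1 e.2).mpr ⟨he, Or.inl ?_⟩)
        rwa [Prod.mk.eta]
    have hind : (U.indicator (1 : V → ℝ)) e.1 = (U.indicator (1 : V → ℝ)) e.2 := by
      by_cases h1 : e.1 ∈ U
      · simp [Set.indicator_of_mem, h1, hiff.mp h1]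
      · have h2 : e.2 ∉ U := fun hh => h1 (hiff.mpr hh)
        rw [Set.indicator_of_notMem h1, Set.indicator_of_notMem h2]
    rw [hind, sub_self, zero_mul, mul_zero]

end KernelHelpers

/-- equivalence of the two definitions of ε-degree balance preserving
directed spectral approximation (for the complete edge set `E = V × V`). -/
theorem stmt_1 {V : Type*} [Fintype V] [DecidableEq V]
    (w w' : V × V → ℝ) (hw : ∀ e, 0 ≤ w e) (hw' : ∀ e, 0 ≤ w' e)
    (ε : ℝ) (hε : 0 ≤ ε) :
    bilinApprox (dirLapP w - dirLapP w') (undLapP w) ε ↔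
      ((∀ U : Set V, IsCompOf (undSGP w) U →
          (∀ v ∈ U,
              (∑ u : V, U.indicator (fun u => w (v, u) - w (u, v)) u)
                = ∑ u : V, U.indicator (fun u => w' (v, u) - w' (u, v)) u) ∧
          (∀ u v : V, ((u ∈ U ∧ v ∉ U) ∨ (u ∉ U ∧ v ∈ U)) → w' (u, v) = 0)) ∧
        l2OpNormLE
          (pinvSqrt (undLapP w) * (dirLapP w - dirLapP w') * pinvSqrt (undLapP w)) ε) := by
  classical
  have hLsym := undLapP_transpose w
  have hLpos := undLapP_quad_nonneg w hw
  have hLpsd := undLapP_posSemidef w hw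
  set L : Matrix V V ℝ := undLapP w with hLdef
  set A : Matrix V V ℝ := dirLapP w - dirLapP w' with hAdef
  set R : Matrix V V ℝ := psdSqrt L with hRdef
  set K : Matrix V V ℝ := (hLpsd.1.eigenvectorUnitary : Matrix V V ℝ) with hK
  have hstar : star K = Kᵀ := by
    rw [Matrix.star_eq_conjTranspose, Matrix.conjTranspose_eq_transpose_of_trivial]
  have hKK : Kᵀ * K = 1 := by
    rw [← hstar]
    exact Matrix.mem_unitaryGroup_iff'.mp hLpsd.1.eigenvectorUnitary.2
  have hReq : R = K * diagonal (Real.sqrt ∘ hLpsd.1.eigenvalues) * Kᵀ := by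
    rw [hRdef, ← hstar]; simp only [psdSqrt, dif_pos hLpsd]; rfl
  have hspec : L = K * diagonal hLpsd.1.eigenvalues * Kᵀ := by
    have := hLpsd.1.spectral_theorem
    rw [Unitary.conjStarAlgAut_apply] at this
    rw [← hstar]
    exact this
  have hRR : R * R = L := by
    rw [hReq]
    calc K * diagonal (Real.sqrt ∘ hLpsd.1.eigenvalues) * Kᵀ * (K * diagonal (Real.sqrt ∘ hLpsd.1.eigenvalues) * Kᵀ)
        = K * (diagonal (Real.sqrt ∘ hLpsd.1.eigenvalues) * ((Kᵀ * K) * (diagonal (Real.sqrt ∘ hLpsd.1.eigenvalues) * Kᵀ))) := by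
          simp only [Matrix.mul_assoc]
    _ = K * ((diagonal (Real.sqrt ∘ hLpsd.1.eigenvalues) * diagonal (Real.sqrt ∘ hLpsd.1.eigenvalues)) * Kᵀ) := by
          rw [hKK, one_mul, Matrix.mul_assoc]
    _ = K * diagonal hLpsd.1.eigenvalues * Kᵀ := by
          rw [Matrix.diagonal_mul_diagonal, Matrix.mul_assoc]
          congr 3
          funext i
          exact Real.mul_self_sqrt (hLpsd.eigenvalues_nonneg i)
    _ = L := hspec.symm
  have hRsym : Rᵀ = R := by
    rw [hReq]
    simp only [Matrix.transpose_mul, Matrix.transpose_transpose, Matrix.diagonal_transpose,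
      Matrix.mul_assoc]
  have hRherm : R.IsHermitian := (Matrix.conjTranspose_eq_transpose_of_trivial R).trans hRsym
  have hexists : ∃ B, IsMPInv R B := exists_isMPInv hRherm
  set S : Matrix V V ℝ := mpinv R with hSdef
  have hpinv : pinvSqrt L = S := by rw [hSdef, hRdef]; rfl
  have hSmp : IsMPInv R S := by rw [hSdef]; exact isMPInv_mpinv hexists
  have hSsym : Sᵀ = S := by rw [hSdef]; exact mpinv_transpose_eq hRsym hexists
  obtain ⟨m1, m2, m3, m4⟩ := hSmp
  have hSR_RS : S * R = R * S := by
    have h : (S * R)ᵀ = R * S := by rw [Matrix.transpose_mul, hRsym, hSsym]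
    rw [← m4, h]
  have m2' : S * (R * S) = S := by rw [← Matrix.mul_assoc]; exact m2
  have hPsym : (R * S)ᵀ = R * S := m3
  have hPP : (R * S) * (R * S) = R * S := by rw [Matrix.mul_assoc, m2']
  have hRP : R * (R * S) = R := by rw [← hSR_RS, ← Matrix.mul_assoc]; exact m1
  have hLP : L * (R * S) = L := by rw [← hRR, Matrix.mul_assoc, hRP]
  have hsq : ∀ z : V → ℝ, (∑ i, z i ^ 2) = z ⬝ᵥ z := by
    intro z
    simp [dotProduct, pow_two]
  constructor
  · intro hb
    constructor
    · intro U hU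
      rw [struct_iff_mulVec w w' hw hw' U hU, ← hAdef]
      have hLU := indicator_quad_zero w hw U hU
      rw [← hLdef] at hLU
      constructor
      · have h0 : ∀ x : V → ℝ, x ⬝ᵥ A *ᵥ (U.indicator (1 : V → ℝ)) = 0 := by
          intro x
          have h1 := hb x (U.indicator (1 : V → ℝ))
          rw [hLU, mul_zero, Real.sqrt_zero, mul_zero] at h1
          exact abs_eq_zero.mp (le_antisymm h1 (abs_nonneg _))
        exact dotProduct_self_eq_zero.mp (h0 (A *ᵥ U.indicator (1 : V → ℝ)))
      · have h0 : ∀ y : V → ℝ, ((Aᵀ *ᵥ (U.indicator (1 : V → ℝ))) ⬝ᵥ y) = 0 := by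
          intro y
          have h1 := hb (U.indicator (1 : V → ℝ)) y
          rw [hLU, zero_mul, Real.sqrt_zero, mul_zero] at h1
          have h2 : (U.indicator (1 : V → ℝ)) ⬝ᵥ A *ᵥ y
              = (Aᵀ *ᵥ (U.indicator (1 : V → ℝ))) ⬝ᵥ y := by
            rw [Matrix.dotProduct_mulVec, ← Matrix.mulVec_transpose]
          rw [h2] at h1
          exact abs_eq_zero.mp (le_antisymm h1 (abs_nonneg _))
        exact dotProduct_self_eq_zero.mp (h0 (Aᵀ *ᵥ U.indicator (1 : V → ℝ)))
    · rw [hpinv]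
      intro x y
      have hxy : x ⬝ᵥ (S * A * S) *ᵥ y = (S *ᵥ x) ⬝ᵥ A *ᵥ (S *ᵥ y) := by
        rw [← Matrix.mulVec_mulVec, ← Matrix.mulVec_mulVec, dot_sym_mulVec hSsym]
      rw [hxy]
      refine le_trans (hb (S *ᵥ x) (S *ᵥ y)) ?_
      have hq : ∀ v : V → ℝ, (S *ᵥ v) ⬝ᵥ L *ᵥ (S *ᵥ v)
          = ((R * S) *ᵥ v) ⬝ᵥ ((R * S) *ᵥ v) := by
        intro v
        rw [← hRR, ← Matrix.mulVec_mulVec, dot_sym_mulVec hRsym, Matrix.mulVec_mulVec]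
      have hle : ∀ v : V → ℝ, ((R * S) *ᵥ v) ⬝ᵥ ((R * S) *ᵥ v) ≤ v ⬝ᵥ v := by
        intro v
        have h1 : ((R * S) *ᵥ v) ⬝ᵥ ((R * S) *ᵥ v) = v ⬝ᵥ (R * S) *ᵥ v := by
          calc ((R * S) *ᵥ v) ⬝ᵥ ((R * S) *ᵥ v)
              = v ⬝ᵥ (R * S) *ᵥ ((R * S) *ᵥ v) := (dot_sym_mulVec hPsym v _).symm
          _ = v ⬝ᵥ (R * S) *ᵥ v := by rw [Matrix.mulVec_mulVec, hPP]
        have h2 : (0:ℝ) ≤ (v - (R * S) *ᵥ v) ⬝ᵥ (v - (R * S) *ᵥ v) :=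
          Finset.sum_nonneg fun i _ => mul_self_nonneg _
        have h3 : (v - (R * S) *ᵥ v) ⬝ᵥ (v - (R * S) *ᵥ v)
            = v ⬝ᵥ v - v ⬝ᵥ (R * S) *ᵥ v := by
          have hcomm : ((R * S) *ᵥ v) ⬝ᵥ v = v ⬝ᵥ (R * S) *ᵥ v := dotProduct_comm _ _
          rw [sub_dotProduct, dotProduct_sub, dotProduct_sub, h1, hcomm]
          ring
        rw [h1]
        rw [h3] at h2
        linarith
      have hax : (S *ᵥ x) ⬝ᵥ L *ᵥ (S *ᵥ x) ≤ ∑ i, x i ^ 2 := by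
        rw [hq x, hsq x]; exact hle x
      have hay : (S *ᵥ y) ⬝ᵥ L *ᵥ (S *ᵥ y) ≤ ∑ j, y j ^ 2 := by
        rw [hq y, hsq y]; exact hle y
      calc ε * Real.sqrt (((S *ᵥ x) ⬝ᵥ L *ᵥ (S *ᵥ x)) * ((S *ᵥ y) ⬝ᵥ L *ᵥ (S *ᵥ y)))
          = ε * (Real.sqrt ((S *ᵥ x) ⬝ᵥ L *ᵥ (S *ᵥ x))
              * Real.sqrt ((S *ᵥ y) ⬝ᵥ L *ᵥ (S *ᵥ y))) := by
            rw [Real.sqrt_mul (hLpos (S *ᵥ x))]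
      _ ≤ ε * (Real.sqrt (∑ i, x i ^ 2) * Real.sqrt (∑ j, y j ^ 2)) := by
            refine mul_le_mul_of_nonneg_left ?_ hε
            exact mul_le_mul (Real.sqrt_le_sqrt hax) (Real.sqrt_le_sqrt hay)
              (Real.sqrt_nonneg _) (Real.sqrt_nonneg _)
      _ = ε * Real.sqrt (∑ i, x i ^ 2) * Real.sqrt (∑ j, y j ^ 2) := by ring
  · rintro ⟨hstruct, hnorm⟩
    rw [hpinv] at hnorm
    intro x y
    have hAind : ∀ U : Set V, IsCompOf (undSGP w) U →
        A *ᵥ (U.indicator (1 : V → ℝ)) = 0 := by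
      intro U hU
      have h := ((struct_iff_mulVec w w' hw hw' U hU).mp (hstruct U hU)).1
      rwa [← hAdef] at h
    have hAtind : ∀ U : Set V, IsCompOf (undSGP w) U →
        Aᵀ *ᵥ (U.indicator (1 : V → ℝ)) = 0 := by
      intro U hU
      have h := ((struct_iff_mulVec w w' hw hw' U hU).mp (hstruct U hU)).2
      rwa [← hAdef] at h
    have hLk : ∀ v : V → ℝ, L *ᵥ (v - (R * S) *ᵥ v) = 0 := by
      intro v
      rw [Matrix.mulVec_sub, Matrix.mulVec_mulVec, hLP, sub_self]
    have hconstx : ∀ a b : V, (undSGP w).Adj a b →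
        (x - (R * S) *ᵥ x) a = (x - (R * S) *ᵥ x) b := by
      apply const_on_adj w hw
      rw [← hLdef]
      exact hLk x
    have hconsty : ∀ a b : V, (undSGP w).Adj a b →
        (y - (R * S) *ᵥ y) a = (y - (R * S) *ᵥ y) b := by
      apply const_on_adj w hw
      rw [← hLdef]
      exact hLk y
    have hAky : A *ᵥ (y - (R * S) *ᵥ y) = 0 := decomp_mulVec_zero A hAind _ hconsty
    have hAtkx : Aᵀ *ᵥ (x - (R * S) *ᵥ x) = 0 := decomp_mulVec_zero Aᵀ hAtind _ hconstx
    have hmain : x ⬝ᵥ A *ᵥ y = (R *ᵥ x) ⬝ᵥ (S * A * S) *ᵥ (R *ᵥ y) := by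
      have h1 : (R *ᵥ x) ⬝ᵥ (S * A * S) *ᵥ (R *ᵥ y)
          = (S *ᵥ (R *ᵥ x)) ⬝ᵥ A *ᵥ (S *ᵥ (R *ᵥ y)) := by
        rw [← Matrix.mulVec_mulVec, ← Matrix.mulVec_mulVec, dot_sym_mulVec hSsym]
      have h2 : ∀ v : V → ℝ, S *ᵥ (R *ᵥ v) = (R * S) *ᵥ v := by
        intro v; rw [Matrix.mulVec_mulVec, hSR_RS]
      rw [h1, h2, h2]
      have hy2 : A *ᵥ ((R * S) *ᵥ y) = A *ᵥ y := by
        have hsplit : (R * S) *ᵥ y = y - (y - (R * S) *ᵥ y) := by abel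
        rw [hsplit, Matrix.mulVec_sub, hAky, sub_zero]
      rw [hy2]
      have hxsplit : x ⬝ᵥ A *ᵥ y
          = ((R * S) *ᵥ x) ⬝ᵥ A *ᵥ y + (x - (R * S) *ᵥ x) ⬝ᵥ A *ᵥ y := by
        rw [← add_dotProduct]
        congr 1
        abel
      have hk0 : (x - (R * S) *ᵥ x) ⬝ᵥ A *ᵥ y = 0 := by
        rw [Matrix.dotProduct_mulVec, ← Matrix.mulVec_transpose, hAtkx,
          zero_dotProduct]
      rw [hxsplit, hk0, add_zero]
    rw [hmain]
    refine le_trans (hnorm (R *ᵥ x) (R *ᵥ y)) ?_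
    have hRx : ∀ v : V → ℝ, (∑ i, (R *ᵥ v) i ^ 2) = v ⬝ᵥ L *ᵥ v := by
      intro v
      rw [hsq]
      calc (R *ᵥ v) ⬝ᵥ (R *ᵥ v) = v ⬝ᵥ R *ᵥ (R *ᵥ v) := (dot_sym_mulVec hRsym v _).symm
      _ = v ⬝ᵥ L *ᵥ v := by rw [Matrix.mulVec_mulVec, hRR]
    rw [hRx, hRx, Real.sqrt_mul (hLpos x)]
    exact le_of_eq (mul_assoc _ _ _)


end
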